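/- arXiv:1708.01279 — 2 statements merged into one kernel-verified Lean document; each statement's English description precedes it below -/
import Mathlib

section
/- Vizing's Adjacency Lemma: if G is a simple edge-Δ-critical graph and xy ∈ E(G), then y has at least Δ - d(x) + 1 neighbors z ≠ x with d(z) = Δ. -/
/-!
Uncolor the edge `xy`: by criticality `G - xy` has a `Δ`-edge-coloring `f`. Whenever an edge `uv`
is uncolored, no color is missing at both `u` and `v` (the coloring would extend), even after a
Kempe swap; so `u` and `v` are joined by an `(a, b)`-Kempe path for any `a` missing at `u` and `b`
missing at `v`.

Grow fans at `y` from `x`, admitting `z` when the color of `yz` is missing at the current head.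
Shifting colors along a fan moves the uncolored edge to `y`–head, so no fan vertex shares a
missing color with `y`, and by induction along the fan every fan vertex missing `α` is joined to
`y` by an `(α, δ)`-Kempe path, `δ` missing at `y`. Kempe components are paths or cycles, so
distinct fan vertices have disjoint missing sets; and every color missing at a fan vertex colors an
edge from `y` to another fan vertex. So the missing sets of the fan inject into the fan minus
`x`; as `x` misses at least `Δ - d(x) + 1` colors and every fan vertex of degree below `Δ` misses
one, at least `Δ - d(x) + 1` fan vertices other than `x` have degree `Δ`.
-/

open Finset
open scoped Classical

variable {V : Type*}

/-- `φ` is a proper edge coloring of `G` using colors `{1,…,k}`. -/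
def IsProperEdgeColoring (G : SimpleGraph V) (k : ℕ) (φ : Sym2 V → ℕ) : Prop :=
  (∀ e ∈ G.edgeSet, φ e ∈ Finset.Icc 1 k) ∧
  ∀ e ∈ G.edgeSet, ∀ f ∈ G.edgeSet, e ≠ f → (∃ v, v ∈ e ∧ v ∈ f) → φ e ≠ φ f

/-- The set of colors of `{1,…,k}` missing at `v` under `φ`. -/
noncomputable def missing (G : SimpleGraph V) (k : ℕ) (φ : Sym2 V → ℕ) (v : V) : Finset ℕ :=
  (Finset.Icc 1 k).filter (fun c => ∀ u, G.Adj v u → φ s(v, u) ≠ c)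

/-- `G` is edge-`Δ`-critical: max degree `Δ`, `χ' = Δ+1`, and every proper
subgraph is edge-`Δ`-colorable. -/
def EdgeCritical (G : SimpleGraph V) [Fintype V] (Δ : ℕ) : Prop :=
  G.maxDegree = Δ ∧
  ¬ (∃ φ, IsProperEdgeColoring G Δ φ) ∧
  (∃ φ, IsProperEdgeColoring G (Δ + 1) φ) ∧
  ∀ H : SimpleGraph V, H < G → ∃ φ, IsProperEdgeColoring H Δ φ

theorem adj_deleteEdges_singleton {G : SimpleGraph V} {e : Sym2 V} {a b : V} :
    (G.deleteEdges {e}).Adj a b ↔ G.Adj a b ∧ s(a, b) ≠ e := by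
  simp

theorem adj_deleteEdges_of_ne_of_ne {G : SimpleGraph V} {x y a b : V} (h : G.Adj a b)
    (ha : a ≠ y) (hb : b ≠ y) : (G.deleteEdges {s(x, y)}).Adj a b :=
  adj_deleteEdges_singleton.2 ⟨h, fun he => by
    rcases Sym2.eq_iff.1 he with ⟨-, rfl⟩ | ⟨rfl, -⟩ <;> contradiction⟩

theorem not_adj_deleteEdges_singleton {G : SimpleGraph V} {x y : V} :
    ¬ (G.deleteEdges {s(x, y)}).Adj y x := fun h => (adj_deleteEdges_singleton.1 h).2 Sym2.eq_swap

theorem deleteEdges_singleton_lt {G : SimpleGraph V} {u v : V} (h : G.Adj u v) :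
    G.deleteEdges {s(u, v)} < G :=
  (G.deleteEdges_le _).lt_of_ne fun hG => (adj_deleteEdges_singleton.1 (hG ▸ h)).2 rfl

theorem degree_deleteEdges_lt [Fintype V] {G : SimpleGraph V} {u v : V} (h : G.Adj u v) :
    (G.deleteEdges {s(u, v)}).degree u < G.degree u := by
  simp only [← SimpleGraph.card_neighborFinset_eq_degree]
  refine card_lt_card ((ssubset_iff_of_subset fun q => ?_).2 ⟨v, ?_, ?_⟩) <;> simp_all

section PathsOfMaxDegreeTwo

variable {A : SimpleGraph V}

/- The hypothesis `hdeg` says that `A` has maximum degree at most two. `eq_of_isPath_of_isPath`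
follows two paths leaving `a` away from the vertex `g` they came from. -/

theorem eq_of_isPath_of_isPath
    (hdeg : ∀ t g, A.Adj t g → (A.neighborSet t \ {g}).Subsingleton)
    {a v w g : V} (P : A.Walk a v) (Q : A.Walk a w) (hP : P.IsPath) (hQ : Q.IsPath)
    (hag : A.Adj a g) (hgP : g ∉ P.support) (hgQ : g ∉ Q.support)
    (hv : (A.neighborSet v).Subsingleton) (hw : (A.neighborSet w).Subsingleton) : v = w := by
  induction P generalizing g w with
  | nil =>
    cases Q with
    | nil => rfl
    | cons hac Q' => exact (hgQ (by simp [← hv hac hag])).elim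
  | @cons a m v ham P' ih =>
    cases Q with
    | nil => exact (hgP (by simp [← hw ham hag])).elim
    | @cons _ c _ hac Q' =>
      rw [SimpleGraph.Walk.cons_isPath_iff] at hP hQ
      have hmg : m ≠ g := fun h => hgP (by simp [← h])
      have hcg : c ≠ g := fun h => hgQ (by simp [← h])
      obtain rfl := hdeg a g hag ⟨ham, hmg⟩ ⟨hac, hcg⟩
      exact ih Q' hP.1 hQ.1 ham.symm hP.2 hQ.2 hv hw

theorem eq_of_reachable_of_reachable
    (hdeg : ∀ t g, A.Adj t g → (A.neighborSet t \ {g}).Subsingleton) {u v w : V}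
    (hu : (A.neighborSet u).Subsingleton) (hv : (A.neighborSet v).Subsingleton)
    (hw : (A.neighborSet w).Subsingleton) (huv : u ≠ v) (huw : u ≠ w)
    (h₁ : A.Reachable u v) (h₂ : A.Reachable u w) : v = w := by
  classical
  obtain ⟨P, hP⟩ := h₁.some.toPath
  obtain ⟨Q, hQ⟩ := h₂.some.toPath
  cases P with
  | nil => exact absurd rfl huv
  | cons ham P' =>
    cases Q with
    | nil => exact absurd rfl huw
    | cons hac Q' =>
      rw [SimpleGraph.Walk.cons_isPath_iff] at hP hQ
      obtain rfl := hu ham hac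
      exact eq_of_isPath_of_isPath hdeg P' Q' hP.1 hQ.1 ham.symm hP.2 hQ.2 hv hw

end PathsOfMaxDegreeTwo

theorem reachable_of_reachable_of_unique_adj {A D : SimpleGraph V} {y u : V}
    (hu : ∀ q, A.Adj y q → q = u)
    (hle : ∀ a b, A.Adj a b → a ≠ y → b ≠ y → D.Adj a b)
    {v : V} (h : A.Reachable v y) (hvy : v ≠ y) : D.Reachable v u := by
  obtain ⟨W⟩ := h
  induction W with
  | nil => exact absurd rfl hvy
  | @cons a b c hab W ih =>
    by_cases hbc : b = c
    · subst hbc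
      rw [← hu a hab.symm]
    · exact (hle a b hab hvy hbc).reachable.trans (ih hu hle hbc)

section Coloring

variable {k : ℕ} {f : Sym2 V → ℕ}

theorem mem_missing {H : SimpleGraph V} {v : V} {c : ℕ} :
    c ∈ missing H k f v ↔ c ∈ Icc 1 k ∧ ∀ u, H.Adj v u → f s(v, u) ≠ c :=
  mem_filter

theorem exists_adj_of_not_mem_missing {H : SimpleGraph V} {v : V} {c : ℕ} (hc : c ∈ Icc 1 k)
    (hv : c ∉ missing H k f v) : ∃ u, H.Adj v u ∧ f s(v, u) = c := by
  simpa [mem_missing, hc] using hv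

section Proper

variable {H : SimpleGraph V}

theorem IsProperEdgeColoring.of_adj
    (hcol : ∀ ⦃u v⦄, H.Adj u v → f s(u, v) ∈ Icc 1 k)
    (hne : ∀ ⦃t p q⦄, H.Adj t p → H.Adj t q → p ≠ q → f s(t, p) ≠ f s(t, q)) :
    IsProperEdgeColoring H k f := by
  refine ⟨fun e he => ?_, fun e he g hg heg ⟨t, hte, htg⟩ => ?_⟩
  · induction e using Sym2.ind
    exact hcol he
  · obtain ⟨p, rfl⟩ := Sym2.mem_iff_exists.1 hte
    obtain ⟨q, rfl⟩ := Sym2.mem_iff_exists.1 htg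
    exact hne he hg fun hpq => heg (hpq ▸ rfl)

theorem IsProperEdgeColoring.mem_Icc (hf : IsProperEdgeColoring H k f) {u v : V}
    (h : H.Adj u v) : f s(u, v) ∈ Icc 1 k :=
  hf.1 _ h

theorem IsProperEdgeColoring.ne (hf : IsProperEdgeColoring H k f) {t p q : V}
    (hp : H.Adj t p) (hq : H.Adj t q) (hpq : p ≠ q) : f s(t, p) ≠ f s(t, q) :=
  hf.2 _ hp _ hq (fun h => hpq (Sym2.congr_right.1 h)) ⟨t, Sym2.mem_mk_left _ _,
    Sym2.mem_mk_left _ _⟩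

theorem IsProperEdgeColoring.eq_of_eq (hf : IsProperEdgeColoring H k f) {t p q : V}
    (hp : H.Adj t p) (hq : H.Adj t q) (h : f s(t, p) = f s(t, q)) : p = q :=
  by_contra fun hpq => hf.ne hp hq hpq h

theorem IsProperEdgeColoring.mono {H' : SimpleGraph V} (hf : IsProperEdgeColoring H k f)
    (hle : H' ≤ H) : IsProperEdgeColoring H' k f :=
  .of_adj (fun _ _ h => hf.mem_Icc (hle h)) fun _ _ _ hp hq => hf.ne (hle hp) (hle hq)

theorem IsProperEdgeColoring.mem_missing_deleteEdges (hf : IsProperEdgeColoring H k f)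
    {u v : V} (h : H.Adj u v) : f s(u, v) ∈ missing (H.deleteEdges {s(u, v)}) k f u := by
  refine mem_missing.2 ⟨hf.mem_Icc h, fun q hq => ?_⟩
  rw [adj_deleteEdges_singleton] at hq
  exact hf.ne hq.1 h fun hqv => hq.2 (hqv ▸ rfl)

theorem card_le_card_missing_add_degree (v : V) [Fintype (H.neighborSet v)] :
    k ≤ #(missing H k f v) + H.degree v := by
  have hcover :
      Icc 1 k ⊆ missing H k f v ∪ (H.neighborFinset v).image (fun u => f s(v, u)) := by
    intro c hc
    by_cases hm : c ∈ missing H k f v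
    · exact mem_union_left _ hm
    · simp only [mem_missing, hc, true_and, not_forall, not_not] at hm
      obtain ⟨u, hu, rfl⟩ := hm
      exact mem_union_right _ (mem_image_of_mem _ ((H.mem_neighborFinset v u).2 hu))
  calc k = #(Icc 1 k) := by simp
    _ ≤ #(missing H k f v) + #((H.neighborFinset v).image (fun u => f s(v, u))) :=
      (card_le_card hcover).trans (card_union_le _ _)
    _ ≤ #(missing H k f v) + H.degree v := by
      rw [← H.card_neighborFinset_eq_degree]
      exact Nat.add_le_add_left card_image_le _

end Proper

theorem IsProperEdgeColoring.update_of_deleteEdges {G : SimpleGraph V} {u v : V} {c : ℕ}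
    (hf : IsProperEdgeColoring (G.deleteEdges {s(u, v)}) k f)
    (hu : c ∈ missing (G.deleteEdges {s(u, v)}) k f u)
    (hv : c ∈ missing (G.deleteEdges {s(u, v)}) k f v) :
    IsProperEdgeColoring G k (Function.update f s(u, v) c) := by
  have hfree : ∀ ⦃t p q⦄, s(t, p) = s(u, v) → (G.deleteEdges {s(u, v)}).Adj t q →
      c ≠ f s(t, q) := by
    intro t p q htp hq
    rcases Sym2.eq_iff.1 htp with ⟨rfl, -⟩ | ⟨rfl, -⟩
    · exact ((mem_missing.1 hu).2 q hq).symm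
    · exact ((mem_missing.1 hv).2 q hq).symm
  have hdel :
      ∀ ⦃a b⦄, G.Adj a b → s(a, b) ≠ s(u, v) → (G.deleteEdges {s(u, v)}).Adj a b :=
    fun _ _ h hne => adj_deleteEdges_singleton.2 ⟨h, hne⟩
  refine .of_adj (fun a b h => ?_) fun t p q hp hq hpq => ?_
  · by_cases he : s(a, b) = s(u, v)
    · simpa [he] using (mem_missing.1 hu).1
    · simpa [he] using hf.mem_Icc (hdel h he)
  · by_cases hep : s(t, p) = s(u, v) <;> by_cases heq : s(t, q) = s(u, v)
    · exact absurd (Sym2.congr_right.1 (hep.trans heq.symm)) hpq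
    · simpa [hep, heq] using hfree hep (hdel hq heq)
    · simpa [hep, heq] using (hfree heq (hdel hp hep)).symm
    · simpa [hep, heq] using hf.ne (hdel hp hep) (hdel hq heq) hpq

end Coloring

theorem EdgeCritical.disjoint_missing [Fintype V] {G : SimpleGraph V} {Δ : ℕ}
    (hc : EdgeCritical G Δ) {u v : V} {f : Sym2 V → ℕ}
    (hf : IsProperEdgeColoring (G.deleteEdges {s(u, v)}) Δ f) :
    Disjoint (missing (G.deleteEdges {s(u, v)}) Δ f u)
      (missing (G.deleteEdges {s(u, v)}) Δ f v) :=
  disjoint_left.2 fun _ hu hv => hc.2.1 ⟨_, hf.update_of_deleteEdges hu hv⟩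

section Kempe

variable {k : ℕ} {H : SimpleGraph V} {f : Sym2 V → ℕ} {a b : ℕ}

def kempeGraph (H : SimpleGraph V) (f : Sym2 V → ℕ) (a b : ℕ) : SimpleGraph V where
  Adj p q := H.Adj p q ∧ (f s(p, q) = a ∨ f s(p, q) = b)
  symm := ⟨fun p q h => ⟨h.1.symm, by rw [Sym2.eq_swap]; exact h.2⟩⟩
  loopless := ⟨fun p h => H.loopless.irrefl p h.1⟩

theorem kempeGraph_comm : kempeGraph H f a b = kempeGraph H f b a := by
  ext p q
  exact and_congr_right fun _ => or_comm

noncomputable def kempeSwap (H : SimpleGraph V) (f : Sym2 V → ℕ) (a b : ℕ) (v : V) :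
    Sym2 V → ℕ :=
  fun e => if e ∈ (kempeGraph H f a b).edgeSet ∧ ∃ p ∈ e, (kempeGraph H f a b).Reachable v p
    then Equiv.swap a b (f e) else f e

theorem kempeSwap_mk (v t p : V) :
    kempeSwap H f a b v s(t, p) =
      if (kempeGraph H f a b).Adj t p ∧ (kempeGraph H f a b).Reachable v t
      then Equiv.swap a b (f s(t, p)) else f s(t, p) := by
  refine if_congr ⟨fun ⟨hadj, q, hq, hvq⟩ => ⟨hadj, ?_⟩,
    fun ⟨hadj, hvt⟩ => ⟨hadj, t, by simp, hvt⟩⟩ rfl rfl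
  rcases Sym2.mem_iff.1 hq with rfl | rfl
  exacts [hvq, hvq.trans (SimpleGraph.Adj.reachable hadj).symm]

theorem kempeSwap_of_not_reachable {v t : V} (h : ¬ (kempeGraph H f a b).Reachable v t)
    (q : V) : kempeSwap H f a b v s(t, q) = f s(t, q) := by
  rw [kempeSwap_mk, if_neg fun hc => h hc.2]

theorem swap_apply_eq_or_eq {c : ℕ} (h : c = a ∨ c = b) :
    Equiv.swap a b c = a ∨ Equiv.swap a b c = b := by
  rcases h with rfl | rfl <;> simp

theorem IsProperEdgeColoring.kempeSwap (hf : IsProperEdgeColoring H k f) (ha : a ∈ Icc 1 k)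
    (hb : b ∈ Icc 1 k) (v : V) : IsProperEdgeColoring H k (kempeSwap H f a b v) := by
  set K := kempeGraph H f a b
  have hout : ∀ {t q}, H.Adj t q → K.Reachable v t → ¬ (K.Adj t q ∧ K.Reachable v t) →
      f s(t, q) ≠ a ∧ f s(t, q) ≠ b := fun hq hvt hn =>
    ⟨fun h => hn ⟨⟨hq, .inl h⟩, hvt⟩, fun h => hn ⟨⟨hq, .inr h⟩, hvt⟩⟩
  refine .of_adj (fun t p hp => ?_) fun t p q hp hq hpq => ?_
  · rw [kempeSwap_mk]
    split_ifs with h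
    · rcases swap_apply_eq_or_eq h.1.2 with h' | h' <;> rw [h'] <;> assumption
    · exact hf.mem_Icc hp
  · rw [kempeSwap_mk, kempeSwap_mk]
    split_ifs with h₁ h₂ h₂
    · exact fun h => hf.ne hp hq hpq ((Equiv.swap a b).injective h)
    · obtain ⟨hqa, hqb⟩ := hout hq h₁.2 h₂
      rcases swap_apply_eq_or_eq h₁.1.2 with h' | h' <;> rw [h'] <;> exact Ne.symm ‹_›
    · obtain ⟨hpa, hpb⟩ := hout hp h₂.2 h₁
      rcases swap_apply_eq_or_eq h₂.1.2 with h' | h' <;> rw [h'] <;> assumption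
    · exact hf.ne hp hq hpq

theorem mem_missing_kempeSwap {v t : V} (hb : b ∈ Icc 1 k)
    (hvt : (kempeGraph H f a b).Reachable v t) (ha : a ∈ missing H k f t) :
    b ∈ missing H k (kempeSwap H f a b v) t := by
  refine mem_missing.2 ⟨hb, fun q hq => ?_⟩
  have hqa : f s(t, q) ≠ a := (mem_missing.1 ha).2 q hq
  rw [kempeSwap_mk]
  split_ifs with h
  · rcases h.1.2 with h' | h'
    · exact absurd h' hqa
    · rw [h', Equiv.swap_apply_right]
      rintro rfl
      exact hqa h'
  · exact fun h' => h ⟨⟨hq, .inr h'⟩, hvt⟩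

theorem IsProperEdgeColoring.kempeGraph_neighborSet_subsingleton
    (hf : IsProperEdgeColoring H k f) {t : V} (ha : a ∈ missing H k f t) :
    ((kempeGraph H f a b).neighborSet t).Subsingleton := by
  have hb : ∀ {q}, (kempeGraph H f a b).Adj t q → f s(t, q) = b := fun hq =>
    hq.2.resolve_left ((mem_missing.1 ha).2 _ hq.1)
  exact fun q hq r hr => hf.eq_of_eq hq.1 hr.1 ((hb hq).trans (hb hr).symm)

theorem IsProperEdgeColoring.kempeGraph_neighborSet_diff_subsingleton
    (hf : IsProperEdgeColoring H k f) {t g : V} (hg : (kempeGraph H f a b).Adj t g) :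
    ((kempeGraph H f a b).neighborSet t \ {g}).Subsingleton := by
  rintro q ⟨hq, hqg : q ≠ g⟩ r ⟨hr, hrg : r ≠ g⟩
  by_contra hqr
  have := hf.ne hq.1 hr.1 hqr
  have := hf.ne hq.1 hg.1 hqg
  have := hf.ne hr.1 hg.1 hrg
  rcases hq.2 with _ | _ <;> rcases hr.2 with _ | _ <;> rcases hg.2 with _ | _ <;> simp_all

theorem IsProperEdgeColoring.kempeGraph_neighborSet_subsingleton_of_right
    (hf : IsProperEdgeColoring H k f) {t : V} (hb : b ∈ missing H k f t) :
    ((kempeGraph H f a b).neighborSet t).Subsingleton := by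
  rw [kempeGraph_comm]
  exact hf.kempeGraph_neighborSet_subsingleton hb

end Kempe

theorem EdgeCritical.reachable_kempeGraph [Fintype V] {G : SimpleGraph V} {Δ : ℕ}
    (hc : EdgeCritical G Δ) {u v : V} {f : Sym2 V → ℕ} {a b : ℕ}
    (hf : IsProperEdgeColoring (G.deleteEdges {s(u, v)}) Δ f)
    (hau : a ∈ missing (G.deleteEdges {s(u, v)}) Δ f u)
    (hbv : b ∈ missing (G.deleteEdges {s(u, v)}) Δ f v) :
    (kempeGraph (G.deleteEdges {s(u, v)}) f a b).Reachable u v := by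
  set H := G.deleteEdges {s(u, v)}
  -- otherwise swapping `a` and `b` on the component of `u` makes `b` missing at both ends
  by_contra huv
  have hbv' : b ∈ missing H Δ (kempeSwap H f a b u) v := by
    refine mem_missing.2 ⟨(mem_missing.1 hbv).1, fun q hq => ?_⟩
    rw [kempeSwap_of_not_reachable huv]
    exact (mem_missing.1 hbv).2 q hq
  exact disjoint_left.1
    (hc.disjoint_missing (hf.kempeSwap (mem_missing.1 hau).1 (mem_missing.1 hbv).1 u))
    (mem_missing_kempeSwap (mem_missing.1 hbv).1 .rfl hau) hbv'

/-- Fan sequences at the center `y` rooted at `x`, listed newest vertex first. -/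
inductive IsFanChain (H : SimpleGraph V) (k : ℕ) (f : Sym2 V → ℕ) (x y : V) :
    V → List V → Prop
  | base : IsFanChain H k f x y x []
  | cons {z p : V} {l : List V} : IsFanChain H k f x y p l → z ∉ p :: l → H.Adj y z →
      f s(y, z) ∈ missing H k f p → IsFanChain H k f x y z (p :: l)

/-- Every fan edge `yp` takes the color of the edge to the vertex admitted after `p`; the edge to
the head keeps its old value, but it is the one left uncolored. -/
noncomputable def fanShift (y : V) (f : Sym2 V → ℕ) : List V → Sym2 V → ℕ
  | z :: p :: l => Function.update (fanShift y f (p :: l)) s(y, p) (f s(y, z))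
  | _ => f

section FanShift

variable {y : V} {f : Sym2 V → ℕ}

theorem fanShift_cons_cons (z p : V) (l : List V) :
    fanShift y f (z :: p :: l) = Function.update (fanShift y f (p :: l)) s(y, p) (f s(y, z)) :=
  rfl

theorem fanShift_singleton (z : V) : fanShift y f [z] = f := rfl

theorem fanShift_of_center_not_mem (l : List V) {e : Sym2 V} (he : y ∉ e) :
    fanShift y f l e = f e := by
  induction l using fanShift.induct with
  | case1 z p l ih =>
    rw [fanShift_cons_cons, Function.update_of_ne (by rintro rfl; simp at he), ih]
  | case2 l hl => rw [fanShift]; exact hl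

theorem fanShift_of_not_mem {l : List V} {q : V} (hq : q ∉ l) :
    fanShift y f l s(y, q) = f s(y, q) := by
  induction l using fanShift.induct with
  | case1 z p l ih =>
    simp only [List.mem_cons, not_or] at hq
    rw [fanShift_cons_cons, Function.update_of_ne fun h => hq.2.1 (Sym2.congr_right.1 h),
      ih (by simpa using hq.2)]
  | case2 l hl => rw [fanShift]; exact hl

end FanShift

section FanChain

variable {H : SimpleGraph V} {k : ℕ} {f : Sym2 V → ℕ} {x y w : V} {l : List V}

theorem IsFanChain.nodup (h : IsFanChain H k f x y w l) : (w :: l).Nodup := by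
  induction h with
  | base => simp
  | cons _ hz _ _ ih => exact List.nodup_cons.2 ⟨hz, ih⟩

theorem IsFanChain.ne_center (hxy : x ≠ y) (h : IsFanChain H k f x y w l) :
    ∀ v ∈ w :: l, v ≠ y := by
  induction h with
  | base => simpa using hxy
  | cons _ _ hyz _ ih => exact List.forall_mem_cons.2 ⟨hyz.ne', ih⟩

theorem IsFanChain.adj_center {G : SimpleGraph V} (hle : H ≤ G) (hyx : G.Adj y x)
    (h : IsFanChain H k f x y w l) : ∀ v ∈ w :: l, G.Adj y v := by
  induction h with
  | base => simpa using hyx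
  | cons _ _ hyz _ ih => exact List.forall_mem_cons.2 ⟨hle hyz, ih⟩

theorem IsFanChain.exists_of_mem (h : IsFanChain H k f x y w l) {v : V} (hv : v ∈ w :: l) :
    ∃ l', IsFanChain H k f x y v l' := by
  induction h with
  | base => exact ⟨[], by simp_all [IsFanChain.base]⟩
  | cons hpl hz hyz hm ih =>
    rcases List.mem_cons.1 hv with rfl | hv
    exacts [⟨_, .cons hpl hz hyz hm⟩, ih hv]

theorem IsFanChain.exists_parent (hyx : ¬ H.Adj y x) (h : IsFanChain H k f x y w l) {u : V}
    (hu : u ∈ w :: l) (hyu : H.Adj y u) :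
    ∃ p ∈ l, f s(y, u) ∈ missing H k f p ∧ fanShift y f (w :: l) s(y, p) = f s(y, u) := by
  induction h with
  | base => exact absurd (List.mem_singleton.1 hu ▸ hyu) hyx
  | @cons z p l hpl hz hyz hm ih =>
    rw [fanShift_cons_cons]
    rcases List.mem_cons.1 hu with rfl | hu
    · exact ⟨p, List.mem_cons_self, hm, Function.update_self ..⟩
    · obtain ⟨q, hq, hqm, hψq⟩ := ih hu
      have hqp : q ≠ p := fun hqp => (List.nodup_cons.1 hpl.nodup).1 (hqp ▸ hq)
      exact ⟨q, List.mem_cons_of_mem _ hq, hqm,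
        (Function.update_of_ne (fun h => hqp (Sym2.congr_right.1 h)) ..).trans hψq⟩

end FanChain

section ShiftedColoring

variable {G : SimpleGraph V} {k : ℕ} {f : Sym2 V → ℕ} {x y w : V} {l : List V}

theorem IsFanChain.isProperEdgeColoring_fanShift (hxy : G.Adj x y)
    (hf : IsProperEdgeColoring (G.deleteEdges {s(x, y)}) k f)
    (h : IsFanChain (G.deleteEdges {s(x, y)}) k f x y w l) :
    IsProperEdgeColoring (G.deleteEdges {s(y, w)}) k (fanShift y f (w :: l)) := by
  induction h with
  | base => rwa [fanShift_singleton, Sym2.eq_swap]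
  | @cons z p l hpl hz hyz hm ih =>
    have hpy : p ≠ y := hpl.ne_center hxy.ne p List.mem_cons_self
    have hswap : ((G.deleteEdges {s(y, z)}).deleteEdges {s(y, p)}) =
        (G.deleteEdges {s(y, p)}).deleteEdges {s(y, z)} := by
      rw [SimpleGraph.deleteEdges_deleteEdges, SimpleGraph.deleteEdges_deleteEdges,
        Set.union_comm]
    rw [fanShift_cons_cons]
    -- `f (yz)` becomes free at `y` when `yz` is uncolored, and is free at `p` as `z` was admitted
    refine IsProperEdgeColoring.update_of_deleteEdges (hswap ▸ ih.mono
      (SimpleGraph.deleteEdges_le _)) ?_ (mem_missing.2 ⟨(mem_missing.1 hm).1, fun q hq => ?_⟩)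
    · rw [hswap, ← fanShift_of_not_mem (y := y) (f := f) hz]
      refine ih.mem_missing_deleteEdges (adj_deleteEdges_singleton.2 ⟨?_, ?_⟩)
      · exact (adj_deleteEdges_singleton.1 hyz).1
      · exact fun h => hz (Sym2.congr_right.1 h ▸ List.mem_cons_self)
    · obtain ⟨hpq', hqp⟩ := adj_deleteEdges_singleton.1 hq
      have hpq := (adj_deleteEdges_singleton.1 hpq').1
      have hqy : q ≠ y := by rintro rfl; exact hqp Sym2.eq_swap
      rw [fanShift_of_center_not_mem _ (by simp [hpy.symm, hqy.symm])]
      exact (mem_missing.1 hm).2 q (adj_deleteEdges_of_ne_of_ne hpq hpy hqy)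

theorem IsFanChain.exists_eq_fanShift_center
    (h : IsFanChain (G.deleteEdges {s(x, y)}) k f x y w l) {q : V}
    (hq : (G.deleteEdges {s(y, w)}).Adj y q) :
    ∃ t, (G.deleteEdges {s(x, y)}).Adj y t ∧ fanShift y f (w :: l) s(y, q) = f s(y, t) := by
  induction h generalizing q with
  | base => exact ⟨q, by rwa [Sym2.eq_swap] at hq, rfl⟩
  | @cons z p l hpl hz hyz hm ih =>
    rw [fanShift_cons_cons]
    by_cases hqp : q = p
    · exact ⟨z, hyz, hqp ▸ Function.update_self ..⟩
    · rw [Function.update_of_ne fun h => hqp (Sym2.congr_right.1 h)]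
      exact ih (adj_deleteEdges_singleton.2 ⟨(adj_deleteEdges_singleton.1 hq).1,
        fun h => hqp (Sym2.congr_right.1 h)⟩)

theorem IsFanChain.missing_subset_center (h : IsFanChain (G.deleteEdges {s(x, y)}) k f x y w l) :
    missing (G.deleteEdges {s(x, y)}) k f y ⊆
      missing (G.deleteEdges {s(y, w)}) k (fanShift y f (w :: l)) y := fun c hc =>
  mem_missing.2 ⟨(mem_missing.1 hc).1, fun q hq => by
    obtain ⟨t, ht, heq⟩ := h.exists_eq_fanShift_center hq
    exact heq ▸ (mem_missing.1 hc).2 t ht⟩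

theorem IsFanChain.missing_subset_head (hxy : G.Adj x y)
    (h : IsFanChain (G.deleteEdges {s(x, y)}) k f x y w l) :
    missing (G.deleteEdges {s(x, y)}) k f w ⊆
      missing (G.deleteEdges {s(y, w)}) k (fanShift y f (w :: l)) w := fun c hc =>
  mem_missing.2 ⟨(mem_missing.1 hc).1, fun q hq => by
    have hwy := h.ne_center hxy.ne w List.mem_cons_self
    obtain ⟨hwq, hne⟩ := adj_deleteEdges_singleton.1 hq
    have hqy : q ≠ y := by rintro rfl; exact hne Sym2.eq_swap
    rw [fanShift_of_center_not_mem _ (by simp [hwy.symm, hqy.symm])]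
    exact (mem_missing.1 hc).2 q (adj_deleteEdges_of_ne_of_ne hwq hwy hqy)⟩

end ShiftedColoring

section Critical

variable [Fintype V] {G : SimpleGraph V} {Δ : ℕ} {f : Sym2 V → ℕ} {x y w : V} {l : List V}

theorem card_le_card_missing_deleteEdges_add_degree (v : V) :
    Δ ≤ #(missing (G.deleteEdges {s(x, y)}) Δ f v) + G.degree v :=
  (card_le_card_missing_add_degree v).trans
    (Nat.add_le_add_left (SimpleGraph.degree_le_of_le (G.deleteEdges_le _)) _)

theorem add_one_le_card_missing_deleteEdges_add_degree (hxy : G.Adj x y) :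
    Δ + 1 ≤ #(missing (G.deleteEdges {s(x, y)}) Δ f x) + G.degree x :=
  Nat.succ_le_of_lt ((card_le_card_missing_add_degree x).trans_lt
    (Nat.add_lt_add_left (degree_deleteEdges_lt hxy) _))

theorem exists_mem_missing_deleteEdges (hΔ : G.maxDegree = Δ) (hxy : G.Adj x y) :
    ∃ δ, δ ∈ missing (G.deleteEdges {s(x, y)}) Δ f y := by
  have hcard := add_one_le_card_missing_deleteEdges_add_degree (Δ := Δ) (f := f) hxy.symm
  rw [Sym2.eq_swap] at hcard
  have hle := hΔ ▸ G.degree_le_maxDegree y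
  exact card_pos.1 (by omega)

theorem nonempty_missing_deleteEdges_of_degree_ne (hΔ : G.maxDegree = Δ)
    (hw : G.degree w ≠ Δ) :
    (missing (G.deleteEdges {s(x, y)}) Δ f w).Nonempty := by
  have : Δ ≤ #(missing (G.deleteEdges {s(x, y)}) Δ f w) + G.degree w :=
    card_le_card_missing_deleteEdges_add_degree w
  have := hΔ ▸ G.degree_le_maxDegree w
  exact card_pos.1 (by omega)

theorem IsFanChain.disjoint_missing_center (hc : EdgeCritical G Δ) (hxy : G.Adj x y)
    (hf : IsProperEdgeColoring (G.deleteEdges {s(x, y)}) Δ f)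
    (h : IsFanChain (G.deleteEdges {s(x, y)}) Δ f x y w l) :
    Disjoint (missing (G.deleteEdges {s(x, y)}) Δ f w)
      (missing (G.deleteEdges {s(x, y)}) Δ f y) :=
  Disjoint.mono (h.missing_subset_head hxy) h.missing_subset_center
    (hc.disjoint_missing (h.isProperEdgeColoring_fanShift hxy hf)).symm

theorem IsFanChain.exists_adj_center_eq (hc : EdgeCritical G Δ) (hxy : G.Adj x y)
    (hf : IsProperEdgeColoring (G.deleteEdges {s(x, y)}) Δ f)
    (h : IsFanChain (G.deleteEdges {s(x, y)}) Δ f x y w l) {α : ℕ}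
    (hα : α ∈ missing (G.deleteEdges {s(x, y)}) Δ f w) :
    ∃ u, (G.deleteEdges {s(x, y)}).Adj y u ∧ f s(y, u) = α :=
  exists_adj_of_not_mem_missing (mem_missing.1 hα).1
    (disjoint_left.1 (h.disjoint_missing_center hc hxy hf) hα)

theorem IsFanChain.exists_adj_fanShift_eq_of_tail (hc : EdgeCritical G Δ) (hxy : G.Adj x y)
    (hf : IsProperEdgeColoring (G.deleteEdges {s(x, y)}) Δ f) {δ : ℕ}
    (h : IsFanChain (G.deleteEdges {s(x, y)}) Δ f x y w l)
    (htail : ∀ v ∈ l, ∀ α ∈ missing (G.deleteEdges {s(x, y)}) Δ f v,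
      (kempeGraph (G.deleteEdges {s(x, y)}) f α δ).Reachable v y)
    {α : ℕ} (hα : α ∈ missing (G.deleteEdges {s(x, y)}) Δ f w) :
    ∃ t, (G.deleteEdges {s(y, w)}).Adj y t ∧ fanShift y f (w :: l) s(y, t) = α ∧
      (kempeGraph (G.deleteEdges {s(x, y)}) f α δ).Reachable t y := by
  obtain ⟨u, hyu, hu⟩ := h.exists_adj_center_eq hc hxy hf hα
  by_cases hul : u ∈ w :: l
  · obtain ⟨p, hp, hpm, hψp⟩ := h.exists_parent not_adj_deleteEdges_singleton hul hyu
    have hpw : p ≠ w := fun hpw => (List.nodup_cons.1 h.nodup).1 (hpw ▸ hp)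
    refine ⟨p, adj_deleteEdges_singleton.2 ⟨?_, fun h => hpw (Sym2.congr_right.1 h)⟩,
      hψp.trans hu, htail p hp α (hu ▸ hpm)⟩
    exact h.adj_center (SimpleGraph.deleteEdges_le _) hxy.symm p (List.mem_cons_of_mem _ hp)
  · have huw : u ≠ w := fun huw => hul (huw ▸ List.mem_cons_self)
    refine ⟨u, adj_deleteEdges_singleton.2 ⟨(adj_deleteEdges_singleton.1 hyu).1,
      fun h => huw (Sym2.congr_right.1 h)⟩, (fanShift_of_not_mem hul).trans hu, ?_⟩
    exact (show (kempeGraph _ f α δ).Adj y u from ⟨hyu, .inl hu⟩).reachable.symm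

/-- In the shifted coloring the Kempe chain from `w` reaches `y` through the fan edge now colored
`α`; away from `y` it is a Kempe chain of `f`, and the other end of that fan edge is already joined
to `y` in `f`. -/
theorem IsFanChain.reachable_kempeGraph_of_tail (hc : EdgeCritical G Δ) (hxy : G.Adj x y)
    (hf : IsProperEdgeColoring (G.deleteEdges {s(x, y)}) Δ f) {δ : ℕ}
    (hδ : δ ∈ missing (G.deleteEdges {s(x, y)}) Δ f y)
    (h : IsFanChain (G.deleteEdges {s(x, y)}) Δ f x y w l)
    (htail : ∀ v ∈ l, ∀ α ∈ missing (G.deleteEdges {s(x, y)}) Δ f v,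
      (kempeGraph (G.deleteEdges {s(x, y)}) f α δ).Reachable v y)
    {α : ℕ} (hα : α ∈ missing (G.deleteEdges {s(x, y)}) Δ f w) :
    (kempeGraph (G.deleteEdges {s(x, y)}) f α δ).Reachable w y := by
  have hψ := h.isProperEdgeColoring_fanShift hxy hf
  have hreach :
      (kempeGraph (G.deleteEdges {s(y, w)}) (fanShift y f (w :: l)) α δ).Reachable w y := by
    rw [kempeGraph_comm]
    exact (hc.reachable_kempeGraph hψ (h.missing_subset_center hδ)
      (h.missing_subset_head hxy hα)).symm
  obtain ⟨t, hyt, hψt, ht⟩ := h.exists_adj_fanShift_eq_of_tail hc hxy hf htail hα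
  refine (reachable_of_reachable_of_unique_adj (fun q hq => ?_) (fun a b hab ha hb => ?_)
    hreach (h.ne_center hxy.ne w List.mem_cons_self)).trans ht
  · exact hψ.kempeGraph_neighborSet_subsingleton_of_right (h.missing_subset_center hδ) hq
      ⟨hyt, .inl hψt⟩
  · have hψab : fanShift y f (w :: l) s(a, b) = f s(a, b) :=
      fanShift_of_center_not_mem _ (by simp [ha.symm, hb.symm])
    exact ⟨adj_deleteEdges_of_ne_of_ne (adj_deleteEdges_singleton.1 hab.1).1 ha hb,
      hψab ▸ hab.2⟩

theorem IsFanChain.reachable_kempeGraph (hc : EdgeCritical G Δ) (hxy : G.Adj x y)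
    (hf : IsProperEdgeColoring (G.deleteEdges {s(x, y)}) Δ f) {δ : ℕ}
    (hδ : δ ∈ missing (G.deleteEdges {s(x, y)}) Δ f y)
    (h : IsFanChain (G.deleteEdges {s(x, y)}) Δ f x y w l) :
    ∀ v ∈ w :: l, ∀ α ∈ missing (G.deleteEdges {s(x, y)}) Δ f v,
      (kempeGraph (G.deleteEdges {s(x, y)}) f α δ).Reachable v y := by
  induction h with
  | base =>
    simpa using fun α hα =>
      IsFanChain.base.reachable_kempeGraph_of_tail hc hxy hf hδ (by simp) hα
  | cons hpl hz hyz hm ih =>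
    exact List.forall_mem_cons.2
      ⟨fun _ => (IsFanChain.cons hpl hz hyz hm).reachable_kempeGraph_of_tail hc hxy hf hδ ih,
        ih⟩

theorem IsFanChain.eq_of_mem_missing (hc : EdgeCritical G Δ) (hxy : G.Adj x y)
    (hf : IsProperEdgeColoring (G.deleteEdges {s(x, y)}) Δ f) {w' : V} {l' : List V}
    (h : IsFanChain (G.deleteEdges {s(x, y)}) Δ f x y w l)
    (h' : IsFanChain (G.deleteEdges {s(x, y)}) Δ f x y w' l') {α : ℕ}
    (hα : α ∈ missing (G.deleteEdges {s(x, y)}) Δ f w)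
    (hα' : α ∈ missing (G.deleteEdges {s(x, y)}) Δ f w') : w = w' := by
  obtain ⟨δ, hδ⟩ := exists_mem_missing_deleteEdges (f := f) hc.1 hxy
  exact eq_of_reachable_of_reachable (fun _ _ hg => hf.kempeGraph_neighborSet_diff_subsingleton hg)
    (hf.kempeGraph_neighborSet_subsingleton_of_right hδ)
    (hf.kempeGraph_neighborSet_subsingleton hα)
    (hf.kempeGraph_neighborSet_subsingleton hα')
    (h.ne_center hxy.ne w List.mem_cons_self).symm (h'.ne_center hxy.ne w' List.mem_cons_self).symm
    (h.reachable_kempeGraph hc hxy hf hδ w List.mem_cons_self α hα).symm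
    (h'.reachable_kempeGraph hc hxy hf hδ w' List.mem_cons_self α hα').symm

theorem IsFanChain.exists_fanChain_adj_center_eq (hc : EdgeCritical G Δ) (hxy : G.Adj x y)
    (hf : IsProperEdgeColoring (G.deleteEdges {s(x, y)}) Δ f)
    (h : IsFanChain (G.deleteEdges {s(x, y)}) Δ f x y w l) {β : ℕ}
    (hβ : β ∈ missing (G.deleteEdges {s(x, y)}) Δ f w) :
    ∃ u, (∃ l', IsFanChain (G.deleteEdges {s(x, y)}) Δ f x y u l') ∧
      (G.deleteEdges {s(x, y)}).Adj y u ∧ f s(y, u) = β := by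
  obtain ⟨u, hyu, hu⟩ := h.exists_adj_center_eq hc hxy hf hβ
  refine ⟨u, ?_, hyu, hu⟩
  by_cases hul : u ∈ w :: l
  · exact h.exists_of_mem hul
  · exact ⟨_, .cons h hul hyu (hu ▸ hβ)⟩

noncomputable def fan (H : SimpleGraph V) (k : ℕ) (f : Sym2 V → ℕ) (x y : V) : Finset V :=
  univ.filter fun w => ∃ l, IsFanChain H k f x y w l

theorem mem_fan {H : SimpleGraph V} {k : ℕ} :
    w ∈ fan H k f x y ↔ ∃ l, IsFanChain H k f x y w l := by
  simp [fan]

theorem pairwiseDisjoint_missing_fan (hc : EdgeCritical G Δ) (hxy : G.Adj x y)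
    (hf : IsProperEdgeColoring (G.deleteEdges {s(x, y)}) Δ f) :
    (fan (G.deleteEdges {s(x, y)}) Δ f x y : Set V).PairwiseDisjoint
      (missing (G.deleteEdges {s(x, y)}) Δ f) := by
  intro w hw w' hw' hne
  obtain ⟨⟨l, h⟩, ⟨l', h'⟩⟩ := And.intro (mem_fan.1 hw) (mem_fan.1 hw')
  exact disjoint_left.2 fun α hα hα' => hne (h.eq_of_mem_missing hc hxy hf h' hα hα')

theorem biUnion_missing_fan_subset (hc : EdgeCritical G Δ) (hxy : G.Adj x y)
    (hf : IsProperEdgeColoring (G.deleteEdges {s(x, y)}) Δ f) :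
    (fan (G.deleteEdges {s(x, y)}) Δ f x y).biUnion (missing (G.deleteEdges {s(x, y)}) Δ f) ⊆
      ((fan (G.deleteEdges {s(x, y)}) Δ f x y).erase x).image fun u => f s(y, u) := by
  intro β hβ
  obtain ⟨w, hw, hβw⟩ := mem_biUnion.1 hβ
  obtain ⟨l, h⟩ := mem_fan.1 hw
  obtain ⟨u, hu, hyu, rfl⟩ := h.exists_fanChain_adj_center_eq hc hxy hf hβw
  exact mem_image_of_mem _
    (mem_erase.2 ⟨fun hux => not_adj_deleteEdges_singleton (hux ▸ hyu), mem_fan.2 hu⟩)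

end Critical

theorem card_le_card_filter_of_biUnion_subset_image {α β : Type*} [DecidableEq β]
    {W : Finset α} {x : α} (hx : x ∈ W) {m : α → Finset β} {g : α → β} (P : α → Prop)
    [DecidablePred P] (hdisj : (W : Set α).PairwiseDisjoint m)
    (hcover : W.biUnion m ⊆ (W.erase x).image g)
    (hne : ∀ w ∈ W.erase x, ¬ P w → (m w).Nonempty) :
    #(m x) ≤ #((W.erase x).filter P) := by
  set S := W.erase x
  have hsum : #(m x) + ∑ w ∈ S, #(m w) ≤ #S := calc
    _ = ∑ w ∈ W, #(m w) := add_sum_erase W _ hx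
    _ = #(W.biUnion m) := (card_biUnion hdisj).symm
    _ ≤ #(S.image g) := card_le_card hcover
    _ ≤ #S := card_image_le
  have hbad : #(S.filter (¬ P ·)) ≤ ∑ w ∈ S, #(m w) := calc
    _ = ∑ w ∈ S.filter (¬ P ·), 1 := card_eq_sum_ones _
    _ ≤ ∑ w ∈ S.filter (¬ P ·), #(m w) :=
      sum_le_sum fun w hw => card_pos.2 (hne w (mem_filter.1 hw).1 (mem_filter.1 hw).2)
    _ ≤ ∑ w ∈ S, #(m w) := sum_le_sum_of_subset (filter_subset _ _)
  have hsplit := card_filter_add_card_filter_not (s := S) P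
  omega

theorem stmt1 (G : SimpleGraph V) [Fintype V] (Δ : ℕ) (hc : EdgeCritical G Δ)
    (x y : V) (hxy : G.Adj x y) :
    Δ - G.degree x + 1 ≤
      (Finset.univ.filter (fun z => G.Adj y z ∧ z ≠ x ∧ G.degree z = Δ)).card := by
  obtain ⟨f, hf⟩ := hc.2.2.2 _ (deleteEdges_singleton_lt hxy)
  have hmx := add_one_le_card_missing_deleteEdges_add_degree (f := f) (Δ := Δ) hxy
  have hdx := hc.1 ▸ G.degree_le_maxDegree x
  have hcount := card_le_card_filter_of_biUnion_subset_image (mem_fan.2 ⟨[], .base⟩)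
    (fun w => G.degree w = Δ) (pairwiseDisjoint_missing_fan hc hxy hf)
    (biUnion_missing_fan_subset hc hxy hf)
    fun w _ hw => nonempty_missing_deleteEdges_of_degree_ne hc.1 hw
  refine le_trans (by omega) (hcount.trans (card_le_card fun w hw => ?_))
  obtain ⟨⟨hwx, hw⟩, hdeg⟩ := And.imp_left mem_erase.1 (mem_filter.1 hw)
  obtain ⟨l, h⟩ := mem_fan.1 hw
  exact mem_filter.2 ⟨mem_univ w,
    h.adj_center (G.deleteEdges_le _) hxy.symm w List.mem_cons_self, hwx, hdeg⟩
end

section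
/- Let G be a simple graph, e = xy an edge, and φ an edge-Δ-coloring of G - e. If X ⊆ V(G) is an elementary set with respect to φ containing x and both endpoints of e, and q is a positive number with 2(Δ - q) + (Δ - d(x)) + 1 > Δ, then X contains at most one vertex other than x of degree less than q. -/
open Finset
open scoped Classical

variable {V : Type*}

/-!
Each vertex `v` misses at least `Δ - d(v)` colors of `{1,…,Δ}`, and `x` misses one more since
its edge `xy` is uncolored. Missing sets of an elementary set are disjoint subsets of
`{1,…,Δ}`, so two vertices `a, b ≠ x` of degree `< q` would give
`Δ ≥ |φ̄(a)| + |φ̄(b)| + |φ̄(x)| > 2(Δ - q) + (Δ - d(x)) + 1`, contradicting the choice of `q`.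
-/

namespace SimpleGraph

lemma degree_deleteEdges_le {G : SimpleGraph V} {s : Set (Sym2 V)} {v : V}
    [Fintype (G.neighborSet v)] [Fintype ((G.deleteEdges s).neighborSet v)] :
    (G.deleteEdges s).degree v ≤ G.degree v :=
  degree_le_of_le (deleteEdges_le s)

variable {G : SimpleGraph V} {x y : V} [Fintype (G.neighborSet x)]
  [Fintype ((G.deleteEdges {s(x, y)}).neighborSet x)]

lemma neighborFinset_deleteEdges_edge (hxy : G.Adj x y) :
    (G.deleteEdges {s(x, y)}).neighborFinset x = (G.neighborFinset x).erase y := by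
  ext u
  simp only [mem_neighborFinset, deleteEdges_adj, mem_erase, Set.mem_singleton_iff,
    Sym2.eq_iff, true_and]
  constructor
  · rintro ⟨hu, hne⟩
    exact ⟨fun h => hne (Or.inl h), hu⟩
  · rintro ⟨hne, hu⟩
    exact ⟨hu, by rintro (h | ⟨rfl, rfl⟩) <;> [exact hne h; exact G.irrefl hxy]⟩

lemma degree_deleteEdges_edge_add_one (hxy : G.Adj x y) :
    (G.deleteEdges {s(x, y)}).degree x + 1 = G.degree x := by
  rw [← card_neighborFinset_eq_degree, ← card_neighborFinset_eq_degree,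
    neighborFinset_deleteEdges_edge hxy, card_erase_add_one (by simpa using hxy)]

end SimpleGraph

section Missing

variable {H : SimpleGraph V} {k : ℕ} {φ : Sym2 V → ℕ}

lemma le_card_missing_add_degree (v : V) [Fintype (H.neighborSet v)] :
    k ≤ #(missing H k φ v) + H.degree v := by
  have hpresent : Icc 1 k \ missing H k φ v ⊆ (H.neighborFinset v).image (fun u => φ s(v, u)) := by
    intro c hc
    simp only [missing, mem_sdiff, mem_filter, not_and, not_forall, not_not] at hc
    obtain ⟨u, hu, rfl⟩ := hc.2 hc.1
    exact mem_image_of_mem _ (by simpa using hu)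
  calc k = #(Icc 1 k) := by simp
    _ ≤ #(Icc 1 k \ missing H k φ v) + #(missing H k φ v) := card_le_card_sdiff_add_card
    _ ≤ #((H.neighborFinset v).image (fun u => φ s(v, u))) + #(missing H k φ v) := by
        gcongr
    _ ≤ #(missing H k φ v) + H.degree v := by
        rw [add_comm, ← H.card_neighborFinset_eq_degree]
        gcongr
        exact card_image_le

lemma sum_card_missing_le {S : Finset V} (hS : (S : Set V).PairwiseDisjoint (missing H k φ)) :
    ∑ v ∈ S, #(missing H k φ v) ≤ k := by
  rw [← card_biUnion hS]
  calc _ ≤ #(Icc 1 k) := card_le_card (biUnion_subset.2 fun _ _ _ hc => (mem_filter.1 hc).1)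
    _ = k := by simp

end Missing

theorem stmt4_general (G : SimpleGraph V) [Fintype V] (Δ : ℕ)
    (x y : V) (hxy : G.Adj x y) (φ : Sym2 V → ℕ)
    (X : Finset V) (hxX : x ∈ X)
    (hX : ∀ u ∈ X, ∀ v ∈ X, u ≠ v →
      missing (G.deleteEdges {s(x, y)}) Δ φ u ∩ missing (G.deleteEdges {s(x, y)}) Δ φ v = ∅)
    (q : ℝ)
    (hq : 2 * ((Δ : ℝ) - q) + ((Δ : ℝ) - (G.degree x : ℝ)) + 1 > (Δ : ℝ)) :
    (X.filter (fun v => v ≠ x ∧ (G.degree v : ℝ) < q)).card ≤ 1 := by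
  set H := G.deleteEdges {s(x, y)}
  by_contra! hcon
  obtain ⟨a, ha, b, hb, hab⟩ := one_lt_card.mp hcon
  obtain ⟨haX, hax, haq⟩ := mem_filter.mp ha
  obtain ⟨hbX, hbx, hbq⟩ := mem_filter.mp hb
  have hXdisj : (X : Set V).PairwiseDisjoint (missing H Δ φ) := fun u hu v hv huv =>
    disjoint_iff_inter_eq_empty.2 (hX u hu v hv huv)
  have hsum := sum_card_missing_le (hXdisj.subset (s := ({a, b, x} : Finset V)) (by
    simp [Set.insert_subset_iff, haX, hbX, hxX]))
  rw [sum_insert (by simp [hab, hax]), sum_pair hbx] at hsum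
  have hM (v : V) : Δ ≤ #(missing H Δ φ v) + H.degree v := le_card_missing_add_degree v
  have hdeg (v : V) : H.degree v ≤ G.degree v := SimpleGraph.degree_deleteEdges_le
  have hdx : H.degree x + 1 = G.degree x := SimpleGraph.degree_deleteEdges_edge_add_one hxy
  have hΔa : (Δ : ℝ) ≤ #(missing H Δ φ a) + G.degree a := by
    exact_mod_cast (hM a).trans (by gcongr; exact hdeg a)
  have hΔb : (Δ : ℝ) ≤ #(missing H Δ φ b) + G.degree b := by
    exact_mod_cast (hM b).trans (by gcongr; exact hdeg b)
  have hΔx : (Δ : ℝ) + 1 ≤ #(missing H Δ φ x) + G.degree x := by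
    have hMx := hM x
    exact_mod_cast (by omega)
  have hsum' : (#(missing H Δ φ a) + #(missing H Δ φ b) + #(missing H Δ φ x) : ℝ) ≤ Δ := by
    exact_mod_cast (by omega)
  linarith

theorem stmt4 (G : SimpleGraph V) [Fintype V] (Δ : ℕ) (hΔ : G.maxDegree = Δ)
    (x y : V) (hxy : G.Adj x y) (φ : Sym2 V → ℕ)
    (hφ : IsProperEdgeColoring (G.deleteEdges {s(x, y)}) Δ φ)
    (X : Finset V) (hxX : x ∈ X) (hyX : y ∈ X)
    (hX : ∀ u ∈ X, ∀ v ∈ X, u ≠ v →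
      missing (G.deleteEdges {s(x, y)}) Δ φ u ∩ missing (G.deleteEdges {s(x, y)}) Δ φ v = ∅)
    (q : ℝ) (hq0 : 0 < q)
    (hq : 2 * ((Δ : ℝ) - q) + ((Δ : ℝ) - (G.degree x : ℝ)) + 1 > (Δ : ℝ)) :
    (X.filter (fun v => v ≠ x ∧ (G.degree v : ℝ) < q)).card ≤ 1 :=
  stmt4_general G Δ x y hxy φ X hxX hX q hq
end
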